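/- Let M = [[A, Bᵀ],[B, D]] ∈ ℝ^{(m+n)×(m+n)} be nonsingular, R the structure matrix R = [[x₁ᵀ ⊗ I_m, I_m ⊗ x₂ᵀ, 0],[0, x₁ᵀ ⊗ I_n, x₂ᵀ ⊗ I_n]], Φ = diag(Φ_sym, I_{mn+n²}) where Φ_sym is the symmetric-structure matrix for m×m symmetric matrices, and D_E = diag(D_sym, I_{mn+n²}) with D_sym the diagonal scaling making ‖A‖_F = ‖D_sym a‖_2. Then the structured normwise condition number satisfies ‖M⁻¹ [R Φ D_E⁻¹, −I_{m+n}]‖_2 ≤ ‖M⁻¹ [R, −I_{m+n}]‖_2, i.e., the structured normwise condition number is at most the unstructured one. -/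

import Mathlib

open Matrix
open scoped Matrix.Norms.L2Operator

/-- The symmetric basis matrices. -/
def Ssym {m : ℕ} (p : {q : Fin m × Fin m // q.1 ≤ q.2}) : Matrix (Fin m) (Fin m) ℝ :=
  if p.1.1 = p.1.2 then Matrix.single p.1.1 p.1.2 1
  else Matrix.single p.1.1 p.1.2 1 + Matrix.single p.1.2 p.1.1 1

/-- The matrix whose columns are `vec (S_{ij})` for `i ≤ j`. -/
def PhiSym (m : ℕ) : Matrix (Fin m × Fin m) {q : Fin m × Fin m // q.1 ≤ q.2} ℝ :=
  fun q p => Ssym p q.2 q.1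

/-- The structure matrix
`R = [[x₁ᵀ ⊗ I_m, I_m ⊗ x₂ᵀ, 0],[0, x₁ᵀ ⊗ I_n, x₂ᵀ ⊗ I_n]]`. -/
def Rmat {m n : ℕ} (x₁ : Fin m → ℝ) (x₂ : Fin n → ℝ) :
    Matrix (Fin m ⊕ Fin n)
      ((Fin m × Fin m) ⊕ ((Fin m × Fin n) ⊕ (Fin n × Fin n))) ℝ :=
  Matrix.of fun r c =>
    match r, c with
    | Sum.inl i, Sum.inl (j, i') => x₁ j * (if i = i' then 1 else 0)
    | Sum.inl i, Sum.inr (Sum.inl (j, l)) => (if i = j then 1 else 0) * x₂ l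
    | Sum.inl _, Sum.inr (Sum.inr _) => 0
    | Sum.inr _, Sum.inl _ => 0
    | Sum.inr k, Sum.inr (Sum.inl (j, l)) => x₁ j * (if k = l then 1 else 0)
    | Sum.inr k, Sum.inr (Sum.inr (l, k')) => x₂ l * (if k = k' then 1 else 0)

/-- `Φ = diag(Φ_sym, I_{mn+n²})`. -/
def PhiE (m n : ℕ) :
    Matrix ((Fin m × Fin m) ⊕ ((Fin m × Fin n) ⊕ (Fin n × Fin n)))
      ({q : Fin m × Fin m // q.1 ≤ q.2} ⊕ ((Fin m × Fin n) ⊕ (Fin n × Fin n))) ℝ :=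
  Matrix.fromBlocks (PhiSym m) 0 0 1

/-- `D_E⁻¹ = diag(D_sym⁻¹, I_{mn+n²})`. -/
noncomputable def DEinv (m n : ℕ) :
    Matrix ({q : Fin m × Fin m // q.1 ≤ q.2} ⊕ ((Fin m × Fin n) ⊕ (Fin n × Fin n)))
      ({q : Fin m × Fin m // q.1 ≤ q.2} ⊕ ((Fin m × Fin n) ⊕ (Fin n × Fin n))) ℝ :=
  Matrix.diagonal (Sum.elim
    (fun p => if p.1.1 = p.1.2 then (1 : ℝ) else (Real.sqrt 2)⁻¹) fun _ => 1)

/-! With `Q = diag(Φ D_E⁻¹, I)` we have `[R Φ D_E⁻¹, −I] = [R, −I] Q`, and `Q` has orthonormal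
columns, so `‖Q‖₂ ≤ 1` and submultiplicativity of the spectral norm gives the inequality. The
columns of `Φ_sym` are indicator vectors of the pairwise disjoint sets `{(i, j), (j, i)}`,
`i ≤ j`, of size `1` or `2`; `D_sym⁻¹` rescales them to unit length. -/

namespace Matrix

section L2OpNorm

variable {𝕜 : Type*} [RCLike 𝕜] {k l : Type*} [Fintype k] [Fintype l] [DecidableEq l]

lemma l2_opNorm_le_one_of_conjTranspose_mul_self_eq_one {Q : Matrix k l 𝕜} (hQ : Qᴴ * Q = 1) :
    ‖Q‖ ≤ 1 := by
  have h1 : ‖(1 : Matrix l l 𝕜)‖ ≤ 1 := by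
    rw [← diagonal_one, l2_opNorm_diagonal, pi_norm_le_iff_of_nonneg zero_le_one]
    simp
  have hsq : ‖Q‖ * ‖Q‖ ≤ 1 := by rwa [← l2_opNorm_conjTranspose_mul_self, hQ]
  nlinarith [norm_nonneg Q]

lemma l2_opNorm_mul_le_of_conjTranspose_mul_self_eq_one [DecidableEq k] {j : Type*} [Fintype j]
    (X : Matrix j k 𝕜) {Q : Matrix k l 𝕜} (hQ : Qᴴ * Q = 1) : ‖X * Q‖ ≤ ‖X‖ :=
  (l2_opNorm_mul X Q).trans <| mul_le_of_le_one_right (norm_nonneg X)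
    (l2_opNorm_le_one_of_conjTranspose_mul_self_eq_one hQ)

end L2OpNorm

section Blocks

variable {R : Type*} [Semiring R] {k l o : Type*} [Fintype k] [Fintype o] [DecidableEq o]

lemma conjTranspose_mul_self_fromBlocks_zero_zero_one [StarRing R] [DecidableEq l]
    {Q : Matrix k l R} (hQ : Qᴴ * Q = 1) :
    (fromBlocks Q 0 0 (1 : Matrix o o R))ᴴ * fromBlocks Q 0 0 (1 : Matrix o o R) = 1 := by
  simp [fromBlocks_conjTranspose, fromBlocks_multiply, hQ]

lemma fromCols_mul_eq_fromCols_mul_fromBlocks {j : Type*} (X : Matrix j k R) (Q : Matrix k l R)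
    (Y : Matrix j o R) :
    fromCols (X * Q) Y = fromCols X Y * fromBlocks Q 0 0 (1 : Matrix o o R) := by
  simp [fromCols_mul_fromBlocks]

end Blocks

lemma l2_opNorm_mul_fromCols_mul_le {𝕜 : Type*} [RCLike 𝕜] {i j k l o : Type*} [Fintype i]
    [Fintype j] [Fintype k] [Fintype l] [Fintype o] [DecidableEq k] [DecidableEq l]
    [DecidableEq o] (X : Matrix i j 𝕜) (Y : Matrix j k 𝕜) (Z : Matrix j o 𝕜)
    {Q : Matrix k l 𝕜} (hQ : Qᴴ * Q = 1) : ‖X * fromCols (Y * Q) Z‖ ≤ ‖X * fromCols Y Z‖ := by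
  rw [fromCols_mul_eq_fromCols_mul_fromBlocks, ← Matrix.mul_assoc]
  exact l2_opNorm_mul_le_of_conjTranspose_mul_self_eq_one _
    (conjTranspose_mul_self_fromBlocks_zero_zero_one hQ)

lemma transpose_mul_self_eq_one_of_transpose_mul_self_eq_diagonal {R : Type*} [CommSemiring R]
    {k l : Type*} [Fintype k] [Fintype l] [DecidableEq l] {Φ : Matrix k l R} {w d : l → R}
    (hΦ : Φᵀ * Φ = diagonal w) (hd : ∀ i, d i * w i * d i = 1) :
    (Φ * diagonal d)ᵀ * (Φ * diagonal d) = 1 := by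
  rw [transpose_mul, diagonal_transpose, Matrix.mul_assoc, ← Matrix.mul_assoc Φᵀ, hΦ,
    diagonal_mul_diagonal, diagonal_mul_diagonal, ← diagonal_one]
  exact congrArg diagonal (funext fun i => (mul_assoc _ _ _).symm.trans (hd i))

end Matrix

/-- The support of `Ssym p`. -/
def symSupport {m : ℕ} (p : {q : Fin m × Fin m // q.1 ≤ q.2}) : Finset (Fin m × Fin m) :=
  {p.1, p.1.swap}

lemma PhiSym_apply {m : ℕ} (q : Fin m × Fin m) (p : {q : Fin m × Fin m // q.1 ≤ q.2}) :
    PhiSym m q p = if q ∈ symSupport p then 1 else 0 := by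
  obtain ⟨⟨a, b⟩, hab⟩ := p
  obtain ⟨i, j⟩ := q
  simp only [PhiSym, Ssym, symSupport, Finset.mem_insert, Finset.mem_singleton,
    Prod.swap_prod_mk, Prod.mk.injEq]
  split_ifs <;> simp only [Matrix.add_apply, single_apply] <;> grind

lemma card_symSupport {m : ℕ} (p : {q : Fin m × Fin m // q.1 ≤ q.2}) :
    (symSupport p).card = if p.1.1 = p.1.2 then 1 else 2 := by
  obtain ⟨⟨a, b⟩, hab⟩ := p
  by_cases h : a = b
  · simp [symSupport, h]
  · simp [symSupport, h, Prod.ext_iff]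

lemma disjoint_symSupport {m : ℕ} {p p' : {q : Fin m × Fin m // q.1 ≤ q.2}} (h : p ≠ p') :
    Disjoint (symSupport p) (symSupport p') := by
  obtain ⟨⟨a, b⟩, hab⟩ := p
  obtain ⟨⟨c, d⟩, hcd⟩ := p'
  simp only [symSupport, Finset.disjoint_insert_left, Finset.disjoint_insert_right,
    Finset.disjoint_singleton, Finset.mem_insert, Finset.mem_singleton, Prod.swap_prod_mk,
    Prod.mk.injEq, ne_eq, Subtype.mk.injEq] at h hab hcd ⊢
  omega

lemma transpose_PhiSym_mul_PhiSym (m : ℕ) :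
    (PhiSym m)ᵀ * PhiSym m = diagonal fun p => ((symSupport p).card : ℝ) := by
  ext p p'
  have hgram : ((PhiSym m)ᵀ * PhiSym m) p p' = ((symSupport p ∩ symSupport p').card : ℝ) := by
    simp only [mul_apply, transpose_apply, PhiSym_apply, ite_zero_mul_ite_zero, mul_one,
      ← Finset.mem_inter, Finset.sum_boole, Finset.filter_mem_eq_inter, Finset.univ_inter]
  rw [hgram, diagonal_apply]
  split_ifs with h
  · rw [h, Finset.inter_self]
  · rw [Finset.disjoint_iff_inter_eq_empty.mp (disjoint_symSupport h), Finset.card_empty,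
      Nat.cast_zero]

/-- The diagonal of `D_sym⁻¹`, the upper-left block of `DEinv`. -/
noncomputable def dSymInv (m : ℕ) (p : {q : Fin m × Fin m // q.1 ≤ q.2}) : ℝ :=
  if p.1.1 = p.1.2 then 1 else (Real.sqrt 2)⁻¹

lemma dSymInv_mul_card_symSupport_mul_dSymInv {m : ℕ} (p : {q : Fin m × Fin m // q.1 ≤ q.2}) :
    dSymInv m p * (symSupport p).card * dSymInv m p = 1 := by
  rw [card_symSupport, dSymInv]
  split_ifs
  · norm_num
  · field_simp
    norm_num

lemma PhiE_mul_DEinv (m n : ℕ) :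
    PhiE m n * DEinv m n = fromBlocks (PhiSym m * diagonal (dSymInv m)) 0 0 1 := by
  have hD : DEinv m n = fromBlocks (diagonal (dSymInv m)) 0 0 1 := by
    rw [DEinv, ← fromBlocks_diagonal, diagonal_one]
    rfl
  rw [PhiE, hD, fromBlocks_multiply]
  simp only [Matrix.mul_zero, Matrix.zero_mul, Matrix.mul_one, add_zero, zero_add]

lemma conjTranspose_PhiE_mul_DEinv_mul_self (m n : ℕ) :
    (PhiE m n * DEinv m n)ᴴ * (PhiE m n * DEinv m n) = 1 := by
  rw [PhiE_mul_DEinv]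
  refine conjTranspose_mul_self_fromBlocks_zero_zero_one ?_
  rw [conjTranspose_eq_transpose_of_trivial]
  exact transpose_mul_self_eq_one_of_transpose_mul_self_eq_diagonal
    (transpose_PhiSym_mul_PhiSym m) dSymInv_mul_card_symSupport_mul_dSymInv

theorem structured_normwise_le_unstructured_general
    {m n : ℕ} (M : Matrix (Fin m ⊕ Fin n) (Fin m ⊕ Fin n) ℝ)
    (x₁ : Fin m → ℝ) (x₂ : Fin n → ℝ) :
    ‖M⁻¹ * Matrix.fromCols (Rmat x₁ x₂ * PhiE m n * DEinv m n)
        (-(1 : Matrix (Fin m ⊕ Fin n) (Fin m ⊕ Fin n) ℝ))‖ ≤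
      ‖M⁻¹ * Matrix.fromCols (Rmat x₁ x₂)
        (-(1 : Matrix (Fin m ⊕ Fin n) (Fin m ⊕ Fin n) ℝ))‖ := by
  rw [Matrix.mul_assoc (Rmat x₁ x₂)]
  exact l2_opNorm_mul_fromCols_mul_le _ _ _ (conjTranspose_PhiE_mul_DEinv_mul_self m n)

/-- The structured normwise condition-number numerator is bounded by the
unstructured one: `‖M⁻¹ [R Φ D_E⁻¹, −I]‖₂ ≤ ‖M⁻¹ [R, −I]‖₂` (spectral norms). -/
theorem structured_normwise_le_unstructured
    {m n : ℕ} (A : Matrix (Fin m) (Fin m) ℝ) (hA : Aᵀ = A)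
    (B : Matrix (Fin n) (Fin m) ℝ) (D : Matrix (Fin n) (Fin n) ℝ)
    (M : Matrix (Fin m ⊕ Fin n) (Fin m ⊕ Fin n) ℝ)
    (hMdef : M = Matrix.fromBlocks A Bᵀ B D) (hM : IsUnit M.det)
    (x₁ : Fin m → ℝ) (x₂ : Fin n → ℝ) :
    ‖M⁻¹ * Matrix.fromCols (Rmat x₁ x₂ * PhiE m n * DEinv m n)
        (-(1 : Matrix (Fin m ⊕ Fin n) (Fin m ⊕ Fin n) ℝ))‖ ≤
      ‖M⁻¹ * Matrix.fromCols (Rmat x₁ x₂)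
        (-(1 : Matrix (Fin m ⊕ Fin n) (Fin m ⊕ Fin n) ℝ))‖ :=
  structured_normwise_le_unstructured_general M x₁ x₂
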